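/- Identifiability of the Kronecker factorization under a trace constraint: if U₁, U₂ are p×p positive definite, V₁, V₂ are q×q positive definite with tr(V₁) = tr(V₂) = q, and V₁ ⊗ U₁ = V₂ ⊗ U₂, then V₁ = V₂ and U₁ = U₂. -/

import Mathlib

open Matrix
open scoped Kronecker

namespace Matrix

variable {R l m n o : Type*}

theorem sum_kronecker_apply_diag [Fintype m] [CommSemiring R]
    (A : Matrix m m R) (B : Matrix n o R) (j : n) (k : o) :
    ∑ i, (A ⊗ₖ B) (i, j) (i, k) = A.trace * B j k := by
  simp only [kroneckerMap_apply, trace, diag, Finset.sum_mul]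

theorem trace_smul_eq_of_kronecker_eq [Fintype m] [CommSemiring R]
    {A C : Matrix m m R} {B D : Matrix n o R} (h : A ⊗ₖ B = C ⊗ₖ D) :
    A.trace • B = C.trace • D := by
  ext j k
  simpa only [smul_apply, smul_eq_mul, sum_kronecker_apply_diag] using
    congrArg (fun M : Matrix (m × n) (m × o) R => ∑ i, M (i, j) (i, k)) h

theorem kronecker_right_cancel [MulZeroClass R] [IsRightCancelMulZero R]
    {A C : Matrix l m R} {B : Matrix n o R} (hB : B ≠ 0) (h : A ⊗ₖ B = C ⊗ₖ B) :
    A = C := by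
  obtain ⟨j, k, hjk⟩ : ∃ j k, B j k ≠ 0 := by
    by_contra! hzero
    exact hB (ext hzero)
  ext i i'
  exact mul_right_cancel₀ hjk (congrFun (congrFun h (i, j)) (i', k))

theorem PosDef.ne_zero [Fintype n] [Nonempty n] [CommRing R] [PartialOrder R]
    [StarRing R] [Nontrivial R] {A : Matrix n n R} (hA : A.PosDef) : A ≠ 0 := by
  obtain ⟨i⟩ := ‹Nonempty n›
  intro hzero
  simpa [hzero] using hA.diag_pos (i := i)

end Matrix

theorem kronecker_identifiable_of_trace_constraint_general (p q : ℕ)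
    (hp : 1 ≤ p) (hq : 1 ≤ q)
    (U₁ U₂ : Matrix (Fin p) (Fin p) ℝ) (V₁ V₂ : Matrix (Fin q) (Fin q) ℝ)
    (hU₂ : U₂.PosDef)
    (htr₁ : V₁.trace = (q : ℝ)) (htr₂ : V₂.trace = (q : ℝ))
    (h : V₁ ⊗ₖ U₁ = V₂ ⊗ₖ U₂) :
    V₁ = V₂ ∧ U₁ = U₂ := by
  have hU : U₁ = U₂ := by
    have htraced := trace_smul_eq_of_kronecker_eq h
    rw [htr₁, htr₂] at htraced
    exact smul_right_injective _ (Nat.cast_ne_zero.2 (by omega)) htraced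
  subst hU
  have : Nonempty (Fin p) := ⟨⟨0, hp⟩⟩
  exact ⟨kronecker_right_cancel hU₂.ne_zero h, rfl⟩

/-- identifiability of the Kronecker factorization under a
trace constraint. -/
theorem kronecker_identifiable_of_trace_constraint (p q : ℕ)
    (hp : 1 ≤ p) (hq : 1 ≤ q)
    (U₁ U₂ : Matrix (Fin p) (Fin p) ℝ) (V₁ V₂ : Matrix (Fin q) (Fin q) ℝ)
    (hU₁ : U₁.PosDef) (hU₂ : U₂.PosDef) (hV₁ : V₁.PosDef) (hV₂ : V₂.PosDef)
    (htr₁ : V₁.trace = (q : ℝ)) (htr₂ : V₂.trace = (q : ℝ))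
    (h : V₁ ⊗ₖ U₁ = V₂ ⊗ₖ U₂) :
    V₁ = V₂ ∧ U₁ = U₂ :=
  kronecker_identifiable_of_trace_constraint_general p q hp hq U₁ U₂ V₁ V₂ hU₂ htr₁ htr₂ h
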